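/- Assume λ_k < α ≤ β. Then for every v ∈ V₂ the function u ↦ J_{α,β}(u+v) is strictly concave on V₁ and anticoercive on V₁: J_{α,β}(u+v) → −∞ as ‖u‖ → ∞ with u ∈ V₁. -/

import Mathlib

/-!
If `v ⊥ V₁` both in `X₀` and in `L²`, then `‖f⁺‖² + ‖f⁻‖² = ‖f‖²` gives, for `u ∈ V₁`,
`2 J_{α,β}(u + v) = Q(u) + Q(v) - (β - α) ‖(T (u + v))⁻‖²` with `Q(w) = ‖w‖² - α ‖T w‖²`.
Since `α > λ_k`, the quadratic form `Q` is bounded by `-(α / λ_k - 1) ‖u‖²` on `V₁`, hence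
strictly concave there and tends to `-∞`, while the last term is concave because `f ↦ ‖f⁻‖` is
convex and `β ≥ α`.
-/

open MeasureTheory RealInnerProductSpace Filter Topology

/-- The functional `J_{α,β}(u) = ½(B(u,u) - α∫_Ω (u⁺)² - β∫_Ω (u⁻)²)`, where the Hilbert
space `X₀` carries the Gagliardo-type inner product `B = ⟪·,·⟫` and `T : X₀ → L²(Ω)` is the
embedding into `L²(Ω)`; note `∫_Ω (u⁺)² = ‖(Tu)⁺‖²_{L²}`. -/
noncomputable def Jfun {Ω : Type*} [MeasurableSpace Ω] {μ : Measure Ω}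
    {X₀ : Type*} [NormedAddCommGroup X₀] [InnerProductSpace ℝ X₀]
    (T : X₀ →ₗ[ℝ] Lp ℝ 2 μ) (α β : ℝ) (u : X₀) : ℝ :=
  (⟪u, u⟫ - α * ‖Lp.posPart (T u)‖ ^ 2 - β * ‖Lp.negPart (T u)‖ ^ 2) / 2

namespace MeasureTheory.Lp

variable {δ : Type*} [MeasurableSpace δ] {μ : Measure δ}

theorem norm_posPart_sq_add_norm_negPart_sq (f : Lp ℝ 2 μ) :
    ‖posPart f‖ ^ 2 + ‖negPart f‖ ^ 2 = ‖f‖ ^ 2 := by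
  have hsub : posPart f - negPart f = f := by
    refine Lp.ext ?_
    filter_upwards [Lp.coeFn_sub (posPart f) (negPart f), coeFn_posPart f,
      coeFn_negPart_eq_max f] with x hsub hpos hneg
    rw [hsub, Pi.sub_apply, hpos, hneg, max_zero_sub_max_neg_zero_eq_self]
  have horth : ⟪posPart f, negPart f⟫ = 0 := by
    rw [L2.inner_def]
    refine integral_eq_zero_of_ae ?_
    filter_upwards [coeFn_posPart f, coeFn_negPart_eq_max f] with x hpos hneg
    rw [hpos, hneg, real_inner_eq_re_inner, RCLike.inner_apply]
    rcases le_total (f x) 0 with h | h <;> simp [h]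
  have := norm_sub_sq_real (posPart f) (negPart f)
  rw [hsub, horth] at this
  linarith

theorem convexOn_norm_negPart {p : ENNReal} [Fact (1 ≤ p)] :
    ConvexOn ℝ Set.univ (fun f : Lp ℝ p μ => ‖negPart f‖) := by
  refine ⟨convex_univ, fun f _ g _ a b ha hb _ => ?_⟩
  have hle : ‖negPart (a • f + b • g)‖ ≤ ‖a • negPart f + b • negPart g‖ := by
    refine norm_le_norm_of_ae_le ?_
    filter_upwards [coeFn_negPart_eq_max (a • f + b • g), coeFn_negPart_eq_max f,
      coeFn_negPart_eq_max g, coeFn_add (a • f) (b • g), coeFn_smul a f, coeFn_smul b g,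
      coeFn_add (a • negPart f) (b • negPart g), coeFn_smul a (negPart f),
      coeFn_smul b (negPart g)] with x h1 h2 h3 h4 h5 h6 h7 h8 h9
    simp only [h1, h2, h3, h4, h5, h6, h7, h8, h9, Pi.add_apply, Pi.smul_apply, smul_eq_mul,
      Real.norm_eq_abs]
    have hfx := mul_le_mul_of_nonneg_left (le_max_left (-f x) 0) ha
    have hgx := mul_le_mul_of_nonneg_left (le_max_left (-g x) 0) hb
    rw [abs_of_nonneg (le_max_right _ _), abs_of_nonneg (by positivity)]
    exact max_le (by linarith) (by positivity)
  calc ‖negPart (a • f + b • g)‖ ≤ ‖a • negPart f + b • negPart g‖ := hle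
    _ ≤ a • ‖negPart f‖ + b • ‖negPart g‖ := by
      refine (norm_add_le _ _).trans_eq ?_
      rw [norm_smul, norm_smul, Real.norm_of_nonneg ha, Real.norm_of_nonneg hb]; rfl

theorem convexOn_norm_negPart_sq_comp_add {E : Type*} [AddCommGroup E] [Module ℝ E]
    (T : E →ₗ[ℝ] Lp ℝ 2 μ) (f : Lp ℝ 2 μ) :
    ConvexOn ℝ Set.univ (fun u => ‖negPart (T u + f)‖ ^ 2) := by
  have h := (convexOn_norm_negPart.pow (fun _ _ => norm_nonneg _) 2).comp_affineMap
    (T.toAffineMap + AffineMap.const ℝ E f)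
  rw [Set.preimage_univ] at h
  exact h.congr fun u _ => by simp

end MeasureTheory.Lp

theorem sub_mul_le_neg_mul_of_le_mul {x t l α : ℝ} (hl : 0 < l) (hα : 0 ≤ α) (h : x ≤ l * t) :
    x - α * t ≤ -(α / l - 1) * x := by
  have := mul_le_mul_of_nonneg_left h (div_nonneg hα hl.le)
  rw [← mul_assoc, div_mul_cancel₀ α hl.ne'] at this
  linarith

theorem StrictConcaveOn.div_const {E : Type*} [AddCommGroup E] [Module ℝ E] {s : Set E}
    {f : E → ℝ} (hf : StrictConcaveOn ℝ s f) {c : ℝ} (hc : 0 < c) :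
    StrictConcaveOn ℝ s (fun x => f x / c) := by
  refine ⟨hf.1, fun x hx y hy hxy a b ha hb hab => ?_⟩
  have := hf.2 hx hy hxy ha hb hab
  simp only [smul_eq_mul] at this ⊢
  rw [← mul_div_assoc, ← mul_div_assoc, ← add_div]
  exact div_lt_div_of_pos_right this hc

section QuadraticForm

variable {E F : Type*} [NormedAddCommGroup E] [InnerProductSpace ℝ E]
  [NormedAddCommGroup F] [InnerProductSpace ℝ F]

theorem norm_smul_add_smul_sq_of_add_eq_one {a b : ℝ} (hab : a + b = 1) (x y : E) :
    ‖a • x + b • y‖ ^ 2 = a * ‖x‖ ^ 2 + b * ‖y‖ ^ 2 - a * b * ‖x - y‖ ^ 2 := by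
  rw [norm_add_sq_real, norm_sub_sq_real, norm_smul, norm_smul, real_inner_smul_left,
    real_inner_smul_right, mul_pow, mul_pow, Real.norm_eq_abs, Real.norm_eq_abs, sq_abs, sq_abs]
  linear_combination (a * ‖x‖ ^ 2 + b * ‖y‖ ^ 2) * hab

theorem strictConcaveOn_norm_sq_sub_mul_norm_sq (T : E →ₗ[ℝ] F) {α : ℝ}
    (hT : ∀ u ≠ 0, ‖u‖ ^ 2 < α * ‖T u‖ ^ 2) :
    StrictConcaveOn ℝ Set.univ (fun u => ‖u‖ ^ 2 - α * ‖T u‖ ^ 2) := by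
  refine ⟨convex_univ, fun x _ y _ hxy a b ha hb hab => ?_⟩
  have hdiff := mul_lt_mul_of_pos_left (hT (x - y) (sub_ne_zero.mpr hxy)) (mul_pos ha hb)
  simp only [smul_eq_mul, map_add, map_smul]
  rw [norm_smul_add_smul_sq_of_add_eq_one hab, norm_smul_add_smul_sq_of_add_eq_one hab,
    ← map_sub]
  linarith

end QuadraticForm

theorem exists_forall_le_of_le_sub_mul_norm_sq {E : Type*} [SeminormedAddCommGroup E]
    {f : E → ℝ} {c ε : ℝ} (hε : 0 < ε) (hf : ∀ x, f x ≤ c - ε * ‖x‖ ^ 2) (C : ℝ) :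
    ∃ R, ∀ x, R ≤ ‖x‖ → f x ≤ C := by
  refine ⟨Real.sqrt ((c - C) / ε), fun x hx => ?_⟩
  have hsq : (c - C) / ε ≤ ‖x‖ ^ 2 := (Real.sqrt_le_iff.mp hx).2
  rw [div_le_iff₀ hε] at hsq
  linarith [hf x]

section Jfun

variable {Ω : Type*} [MeasurableSpace Ω] {μ : Measure Ω}
  {X : Type*} [NormedAddCommGroup X] [InnerProductSpace ℝ X] (T : X →ₗ[ℝ] Lp ℝ 2 μ) {α β : ℝ}

theorem Jfun_eq (w : X) :
    Jfun T α β w = (‖w‖ ^ 2 - α * ‖T w‖ ^ 2 - (β - α) * ‖Lp.negPart (T w)‖ ^ 2) / 2 := by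
  rw [Jfun, real_inner_self_eq_norm_sq, ← Lp.norm_posPart_sq_add_norm_negPart_sq (T w)]
  ring

theorem Jfun_add_of_inner_eq_zero {u v : X} (huv : ⟪u, v⟫ = 0) (hTuv : ⟪T u, T v⟫ = 0) :
    Jfun T α β (u + v) = (‖u‖ ^ 2 - α * ‖T u‖ ^ 2 + (‖v‖ ^ 2 - α * ‖T v‖ ^ 2)
      - (β - α) * ‖Lp.negPart (T u + T v)‖ ^ 2) / 2 := by
  rw [Jfun_eq, map_add T, norm_add_sq_real, norm_add_sq_real, huv, hTuv]
  ring

theorem Jfun_add_le_of_inner_eq_zero {u v : X} (huv : ⟪u, v⟫ = 0) (hTuv : ⟪T u, T v⟫ = 0)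
    (hαβ : α ≤ β) :
    Jfun T α β (u + v) ≤ (‖u‖ ^ 2 - α * ‖T u‖ ^ 2 + (‖v‖ ^ 2 - α * ‖T v‖ ^ 2)) / 2 := by
  rw [Jfun_add_of_inner_eq_zero T huv hTuv]
  have := mul_nonneg (sub_nonneg.mpr hαβ) (sq_nonneg ‖Lp.negPart (T u + T v)‖)
  linarith

end Jfun

theorem stmt_1_general
    {n : ℕ}
    {Ωs : Set (EuclideanSpace ℝ (Fin n))}
    {X₀ : Type*} [NormedAddCommGroup X₀] [InnerProductSpace ℝ X₀]
    (T : X₀ →ₗ[ℝ] Lp ℝ 2 (volume.restrict Ωs))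
    {lk : ℝ} (hlk0 : 0 < lk)
    (V₁ V₂ : Submodule ℝ X₀)
    (hV₂ : ∀ v : X₀, v ∈ V₂ ↔ ∀ u ∈ V₁, ⟪u, v⟫ = 0 ∧ ⟪T u, T v⟫ = 0)
    (hV₁b : ∀ u ∈ V₁, ⟪u, u⟫ ≤ lk * ‖T u‖ ^ 2)
    {α β : ℝ} (hA : lk < α) (hAB : α ≤ β)
    :
    ∀ v : V₂,
      StrictConcaveOn ℝ (Set.univ : Set V₁)
        (fun u : V₁ => Jfun T α β ((u : X₀) + (v : X₀))) ∧
      ∀ C : ℝ, ∃ R : ℝ, ∀ u : V₁, R ≤ ‖(u : X₀)‖ →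
        Jfun T α β ((u : X₀) + (v : X₀)) ≤ C := by
  intro v
  have horth (u : V₁) := (hV₂ v).1 v.2 u u.2
  have hε : 0 < α / lk - 1 := sub_pos.mpr ((one_lt_div hlk0).mpr hA)
  have hQ (u : V₁) :
      ‖(u : X₀)‖ ^ 2 - α * ‖T u‖ ^ 2 ≤ -(α / lk - 1) * ‖(u : X₀)‖ ^ 2 :=
    sub_mul_le_neg_mul_of_le_mul hlk0 (hlk0.trans hA).le
      ((real_inner_self_eq_norm_sq (u : X₀)).symm.trans_le (hV₁b u u.2))
  constructor
  · have hnegDefinite (u : V₁) (hu : u ≠ 0) : ‖u‖ ^ 2 < α * ‖(T ∘ₗ V₁.subtype) u‖ ^ 2 := by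
      have hpos : 0 < ‖(u : X₀)‖ := norm_pos_iff.mpr (by simpa using hu)
      show ‖(u : X₀)‖ ^ 2 < α * ‖T u‖ ^ 2
      linarith [hQ u, mul_pos hε (pow_pos hpos 2)]
    have hconv := (Lp.convexOn_norm_negPart_sq_comp_add (T ∘ₗ V₁.subtype) (T v)).smul
      (sub_nonneg.mpr hAB)
    have hstrict := (((strictConcaveOn_norm_sq_sub_mul_norm_sq _ hnegDefinite).add_const
      (‖(v : X₀)‖ ^ 2 - α * ‖T v‖ ^ 2)).sub_convexOn hconv).div_const two_pos
    refine hstrict.congr fun u _ => ?_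
    simp only [Jfun_add_of_inner_eq_zero T (horth u).1 (horth u).2]
    rfl
  · refine exists_forall_le_of_le_sub_mul_norm_sq (half_pos hε)
      (c := (‖(v : X₀)‖ ^ 2 - α * ‖T v‖ ^ 2) / 2) fun u => ?_
    rw [Submodule.coe_norm u]
    linarith [hQ u, Jfun_add_le_of_inner_eq_zero T (horth u).1 (horth u).2 hAB]

theorem stmt_1
    {n : ℕ} {s : ℝ} (hs0 : 0 < s) (hs1 : s < 1) (hns : 2 * s < (n : ℝ))
    {Ωs : Set (EuclideanSpace ℝ (Fin n))} (hΩb : Bornology.IsBounded Ωs)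
    (hΩm : MeasurableSet Ωs)
    {K : EuclideanSpace ℝ (Fin n) → ℝ} (hKpos : ∀ x, x ≠ 0 → 0 < K x)
    (hK1 : Integrable (fun x => min (‖x‖ ^ 2) 1 * K x))
    (hK2 : ∃ lam > 0, ∀ x, x ≠ 0 → lam * ‖x‖ ^ (-((n : ℝ) + 2 * s)) ≤ K x)
    (hK3 : ∀ x, K (-x) = K x)
    {X₀ : Type*} [NormedAddCommGroup X₀] [InnerProductSpace ℝ X₀] [CompleteSpace X₀]
    (T : X₀ →ₗ[ℝ] Lp ℝ 2 (volume.restrict Ωs)) (hT : Function.Injective T)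
    {lk lk1 : ℝ} (hlk0 : 0 < lk) (hlk : lk < lk1)
    (V₁ V₂ : Submodule ℝ X₀) [FiniteDimensional ℝ V₁]
    (hV₂ : ∀ v : X₀, v ∈ V₂ ↔ ∀ u ∈ V₁, ⟪u, v⟫ = 0 ∧ ⟪T u, T v⟫ = 0)
    (hcompl : IsCompl V₁ V₂)
    (hV₁b : ∀ u ∈ V₁, ⟪u, u⟫ ≤ lk * ‖T u‖ ^ 2)
    (hV₂b : ∀ v ∈ V₂, lk1 * ‖T v‖ ^ 2 ≤ ⟪v, v⟫)
    {α β : ℝ} (hA : lk < α) (hAB : α ≤ β)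
    :
    ∀ v : V₂,
      StrictConcaveOn ℝ (Set.univ : Set V₁)
        (fun u : V₁ => Jfun T α β ((u : X₀) + (v : X₀))) ∧
      ∀ C : ℝ, ∃ R : ℝ, ∀ u : V₁, R ≤ ‖(u : X₀)‖ →
        Jfun T α β ((u : X₀) + (v : X₀)) ≤ C :=
  stmt_1_general T hlk0 V₁ V₂ hV₂ hV₁b hA hAB
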